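/- Radon–Nikodym derivative for the random-cluster model with general cluster weight q > 0 (finite-graph version of the Remark at the end of the Appendix): for every internal configuration ω̃ ∈ {0,1}^E, P̃^q_{J,H}(ω̃) = P̃^q_{J,0}(ω̃) · ( ∏_{C a cluster of ω̃} [ (2/q)·cosh(H(C)) + ((q−2)/q)·e^{−H(C)} ] ) / E_{P̃^q_{J,0}}[ ∏_{C a cluster of ·} ( (2/q)·cosh(H(C)) + ((q−2)/q)·e^{−H(C)} ) ]. -/

import Mathlib

open scoped Classical

namespace FK

variable {V : Type*} [Fintype V] [DecidableEq V]

/-- Internal bond configurations on the edge set `E`. -/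
abbrev Config (E : Finset (Sym2 V)) : Type _ := {e : Sym2 V // e ∈ E} → Bool

/-- Full bond configurations: internal edges together with the ghost edges
(one for each vertex). -/
abbrev GConfig (E : Finset (Sym2 V)) : Type _ := Config E × (V → Bool)

/-- Two vertices are adjacent if they are distinct and joined by an open internal edge. -/
def adj (E : Finset (Sym2 V)) (ω : Config E) (u v : V) : Prop :=
  u ≠ v ∧ ∃ h : s(u, v) ∈ E, ω ⟨s(u, v), h⟩ = true

/-- The same-cluster relation of an internal configuration. -/
def conn (E : Finset (Sym2 V)) (ω : Config E) (u v : V) : Prop :=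
  Relation.ReflTransGen (adj E ω) u v

/-- The cluster of a vertex. -/
noncomputable def cluster (E : Finset (Sym2 V)) (ω : Config E) (v : V) : Finset V :=
  Finset.univ.filter (fun u => conn E ω v u)

/-- The set of clusters (connected components) of an internal configuration. -/
noncomputable def clusters (E : Finset (Sym2 V)) (ω : Config E) : Finset (Finset V) :=
  Finset.univ.image (cluster E ω)

/-- Adjacency in the extended graph, where `none` is the ghost vertex `g`. -/
def adjG (E : Finset (Sym2 V)) (ω : GConfig E) : Option V → Option V → Prop
  | some u, some v => adj E ω.1 u v
  | some u, none => ω.2 u = true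
  | none, some v => ω.2 v = true
  | none, none => False

/-- Connectivity in the extended graph (with the ghost vertex `none`). -/
def connG (E : Finset (Sym2 V)) (ω : GConfig E) (x y : Option V) : Prop :=
  Relation.ReflTransGen (adjG E ω) x y

/-- Number of connected components of the extended graph not containing the ghost. -/
noncomputable def kGhost (E : Finset (Sym2 V)) (ω : GConfig E) : ℕ :=
  (((Finset.univ : Finset V).filter (fun v => ¬ connG E ω (some v) none)).image
    (fun v => Finset.univ.filter (fun u : V => connG E ω (some v) (some u)))).card

/-- The product over internal edges of the usual FK edge weights. -/
noncomputable def edgeWeight (J : Sym2 V → ℝ) (E : Finset (Sym2 V)) (ω : Config E) : ℝ :=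
  ∏ e : {e : Sym2 V // e ∈ E},
    if ω e then 1 - Real.exp (-2 * J e.1) else Real.exp (-2 * J e.1)

/-- Unnormalized FK (q = 2) weight with ghost. -/
noncomputable def fkWeight (J : Sym2 V → ℝ) (H : V → ℝ) (E : Finset (Sym2 V))
    (ω : GConfig E) : ℝ :=
  2 ^ kGhost E ω * edgeWeight J E ω.1 *
    ∏ v, if ω.2 v then 1 - Real.exp (-2 * H v) else Real.exp (-2 * H v)

/-- The FK (q = 2) random-cluster measure with ghost. -/
noncomputable def fkProb (J : Sym2 V → ℝ) (H : V → ℝ) (E : Finset (Sym2 V))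
    (ω : GConfig E) : ℝ :=
  fkWeight J H E ω / ∑ ω' : GConfig E, fkWeight J H E ω'

/-- The marginal of the FK measure with ghost on the internal edges. -/
noncomputable def fkMarginal (J : Sym2 V → ℝ) (H : V → ℝ) (E : Finset (Sym2 V))
    (ωi : Config E) : ℝ :=
  ∑ ωg : V → Bool, fkProb J H E (ωi, ωg)

/-- Unnormalized zero-field random-cluster (q = 2) weight. -/
noncomputable def rcWeight (J : Sym2 V → ℝ) (E : Finset (Sym2 V)) (ω : Config E) : ℝ :=
  2 ^ (clusters E ω).card * edgeWeight J E ω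

/-- The zero-field random-cluster (q = 2) measure. -/
noncomputable def rcProb (J : Sym2 V → ℝ) (E : Finset (Sym2 V)) (ω : Config E) : ℝ :=
  rcWeight J E ω / ∑ ω' : Config E, rcWeight J E ω'

/-- The spin value (±1) of a Boolean. -/
def spin (b : Bool) : ℝ := if b then 1 else -1

/-- The product of the two spins at the endpoints of an (unordered) edge. -/
def pairSpin (σ : V → Bool) : Sym2 V → ℝ :=
  Sym2.lift ⟨fun u v => spin (σ u) * spin (σ v), fun u v => mul_comm _ _⟩

/-- Unnormalized Ising weight. -/
noncomputable def isingWeight (J : Sym2 V → ℝ) (H : V → ℝ) (E : Finset (Sym2 V))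
    (σ : V → Bool) : ℝ :=
  Real.exp ((∑ e ∈ E, J e * pairSpin σ e) + ∑ v, H v * spin (σ v))

/-- The Ising Gibbs measure. -/
noncomputable def isingProb (J : Sym2 V → ℝ) (H : V → ℝ) (E : Finset (Sym2 V))
    (σ : V → Bool) : ℝ :=
  isingWeight J H E σ / ∑ σ' : V → Bool, isingWeight J H E σ'

/-- Unnormalized Edwards–Sokal weight on pairs (spin configuration, bond configuration
with ghost); the ghost spin is `+1` (i.e. `true`). -/
noncomputable def esWeight (J : Sym2 V → ℝ) (H : V → ℝ) (E : Finset (Sym2 V))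
    (p : (V → Bool) × GConfig E) : ℝ :=
  (∏ e : {e : Sym2 V // e ∈ E},
      if p.2.1 e then
        (if ∀ u ∈ e.1, ∀ v ∈ e.1, p.1 u = p.1 v then 1 - Real.exp (-2 * J e.1) else 0)
      else Real.exp (-2 * J e.1))
  * ∏ v, if p.2.2 v then (if p.1 v = true then 1 - Real.exp (-2 * H v) else 0)
         else Real.exp (-2 * H v)

/-- The Edwards–Sokal coupling measure. -/
noncomputable def esProb (J : Sym2 V → ℝ) (H : V → ℝ) (E : Finset (Sym2 V))
    (p : (V → Bool) × GConfig E) : ℝ :=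
  esWeight J H E p / ∑ p' : (V → Bool) × GConfig E, esWeight J H E p'

end FK

namespace FK

variable {V : Type*} [Fintype V] [DecidableEq V]

/-- Unnormalized random-cluster weight with ghost, general cluster weight `q`. -/
noncomputable def fkWeightQ (q : ℝ) (J : Sym2 V → ℝ) (H : V → ℝ) (E : Finset (Sym2 V))
    (ω : GConfig E) : ℝ :=
  q ^ kGhost E ω * edgeWeight J E ω.1 *
    ∏ v, if ω.2 v then 1 - Real.exp (-2 * H v) else Real.exp (-2 * H v)

/-- The random-cluster measure with ghost, general cluster weight `q`. -/
noncomputable def fkProbQ (q : ℝ) (J : Sym2 V → ℝ) (H : V → ℝ) (E : Finset (Sym2 V))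
    (ω : GConfig E) : ℝ :=
  fkWeightQ q J H E ω / ∑ ω' : GConfig E, fkWeightQ q J H E ω'

/-- The marginal on internal edges of the random-cluster measure with ghost,
general cluster weight `q`. -/
noncomputable def fkMarginalQ (q : ℝ) (J : Sym2 V → ℝ) (H : V → ℝ) (E : Finset (Sym2 V))
    (ωi : Config E) : ℝ :=
  ∑ ωg : V → Bool, fkProbQ q J H E (ωi, ωg)

/-- Unnormalized zero-field random-cluster weight, general cluster weight `q`. -/
noncomputable def rcWeightQ (q : ℝ) (J : Sym2 V → ℝ) (E : Finset (Sym2 V))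
    (ω : Config E) : ℝ :=
  q ^ (clusters E ω).card * edgeWeight J E ω

/-- The zero-field random-cluster measure, general cluster weight `q`. -/
noncomputable def rcProbQ (q : ℝ) (J : Sym2 V → ℝ) (E : Finset (Sym2 V))
    (ω : Config E) : ℝ :=
  rcWeightQ q J E ω / ∑ ω' : Config E, rcWeightQ q J E ω'

end FK

/-!
Given `ω̃`, the ghost edges are independent with `P(ω(v,g) = 0) = e^{-2H_v}`, and a cluster `C`
of `ω̃` is a component avoiding the ghost exactly when all its ghost edges are closed, an event of
probability `e^{-2H(C)}`. The clusters being disjoint, summing `q^{k(ω)}` against the ghost-edge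
weights gives `∏_C (1 + (q-1) e^{-2H(C)})`, and
`1 + (q-1) e^{-2h} = q e^{-h} ((2/q) cosh h + ((q-2)/q) e^{-h})`. So the marginal weight of `ω̃` is
`e^{-H(V)}` times its zero-field weight `q^{k̃(ω̃)} ∏_e …` times the product of the cluster
factors, and normalizing gives the formula.
-/

namespace FK

section Bernoulli

open Finset

variable {ι R : Type*} [Fintype ι] [DecidableEq ι] [CommRing R]

omit [Fintype ι] in
theorem prod_one_add_mul_prod_eq_sum_powerset {K : Finset (Finset ι)}
    (hK : (K : Set (Finset ι)).PairwiseDisjoint id) (a : R) (φ : ι → R) :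
    ∏ C ∈ K, (1 + a * ∏ i ∈ C, φ i) = ∑ t ∈ K.powerset, a ^ #t * ∏ i ∈ t.biUnion id, φ i := by
  rw [prod_one_add]
  refine sum_congr rfl fun t ht => ?_
  rw [prod_mul_distrib, prod_const,
    prod_biUnion (hK.subset (coe_subset.2 (mem_powerset.1 ht)))]
  rfl

variable (w : ι → Bool → R)

theorem sum_prod_mul_prod_boole_false (hw : ∀ i, w i true + w i false = 1) (S : Finset ι) :
    ∑ x : ι → Bool, (∏ i, w i (x i)) * ∏ i ∈ S, (if x i = false then 1 else 0) =
      ∏ i ∈ S, w i false := by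
  have hfactor : ∀ x : ι → Bool, (∏ i, w i (x i)) * ∏ i ∈ S, (if x i = false then 1 else 0) =
      ∏ i, w i (x i) * (if i ∈ S then (if x i = false then 1 else 0) else 1) := by
    intro x
    rw [prod_mul_distrib, prod_ite_mem, univ_inter]
  have hsum : ∀ i, ∑ b, w i b * (if i ∈ S then (if b = false then 1 else 0) else 1) =
      if i ∈ S then w i false else 1 := by
    intro i
    by_cases hi : i ∈ S <;> simp [hi, hw]
  rw [sum_congr rfl fun x _ => hfactor x,
    ← Fintype.prod_sum fun i b => w i b * if i ∈ S then (if b = false then 1 else 0) else 1]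
  simp_rw [hsum]
  rw [prod_ite_mem, univ_inter]

/-- If the `x i` are independent with `P(x i = b) = w i b`, the left side is the expectation of
`q ^ #{C ∈ K | x vanishes on C}`; disjointness of the `C` makes the events independent. -/
theorem sum_prod_mul_pow_card_filter_false (hw : ∀ i, w i true + w i false = 1)
    {K : Finset (Finset ι)} (hK : (K : Set (Finset ι)).PairwiseDisjoint id) (q : R) :
    ∑ x : ι → Bool, (∏ i, w i (x i)) * q ^ #(K.filter fun C => ∀ i ∈ C, x i = false) =
      ∏ C ∈ K, (1 + (q - 1) * ∏ i ∈ C, w i false) := by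
  have hpow : ∀ x : ι → Bool, q ^ #(K.filter fun C => ∀ i ∈ C, x i = false) =
      ∏ C ∈ K, (1 + (q - 1) * ∏ i ∈ C, (if x i = false then 1 else 0)) := by
    intro x
    rw [← prod_const, prod_filter]
    refine prod_congr rfl fun C _ => ?_
    rw [prod_boole]
    split_ifs <;> ring
  calc ∑ x : ι → Bool, (∏ i, w i (x i)) * q ^ #(K.filter fun C => ∀ i ∈ C, x i = false)
      = ∑ t ∈ K.powerset, (q - 1) ^ #t * ∑ x : ι → Bool,
          (∏ i, w i (x i)) * ∏ i ∈ t.biUnion id, (if x i = false then 1 else 0) := by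
        simp_rw [hpow, prod_one_add_mul_prod_eq_sum_powerset hK, mul_sum]
        rw [sum_comm]
        simp_rw [mul_left_comm]
    _ = ∏ C ∈ K, (1 + (q - 1) * ∏ i ∈ C, w i false) := by
        simp_rw [sum_prod_mul_prod_boole_false w hw]
        rw [prod_one_add_mul_prod_eq_sum_powerset hK]

end Bernoulli

theorem sum_div_sum_eq_tilt_of_sum_eq {α β K : Type*} [Fintype α] [Fintype β] [Field K]
    {W : α × β → K} {R f : α → K} {c : K} (hc : c ≠ 0) (hR : ∑ a, R a ≠ 0)
    (hW : ∀ a, ∑ b, W (a, b) = c * (R a * f a)) (a : α) :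
    ∑ b, W (a, b) / ∑ p, W p =
      R a / (∑ a', R a') * f a / ∑ a', R a' / (∑ a'', R a'') * f a' := by
  have hZ : ∑ p, W p = c * ∑ a', R a' * f a' := by
    rw [Fintype.sum_prod_type, Finset.mul_sum]
    exact Finset.sum_congr rfl fun a' _ => hW a'
  simp only [div_mul_eq_mul_div, ← Finset.sum_div, hW, hZ, mul_div_mul_left _ _ hc,
    div_div_div_cancel_right₀ hR]

section Clusters

open Finset

variable {V : Type*} {E : Finset (Sym2 V)}

theorem adj_symm {ω : Config E} {u v : V} : adj E ω u v → adj E ω v u := by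
  rintro ⟨hne, hω⟩
  rw [adj, Sym2.eq_swap]
  exact ⟨hne.symm, hω⟩

theorem conn_symm {ω : Config E} {u v : V} (h : conn E ω u v) : conn E ω v u :=
  Relation.ReflTransGen.mono (fun _ _ => adj_symm) _ _ (Relation.ReflTransGen.swap _ _ h)

theorem connG_of_conn (ω : GConfig E) {u v : V} (h : conn E ω.1 u v) :
    connG E ω (some u) (some v) :=
  Relation.ReflTransGen.lift some (fun _ _ h => h) _ _ h

variable [Fintype V]

theorem mem_cluster {ω : Config E} {u v : V} : u ∈ cluster E ω v ↔ conn E ω v u := by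
  simp [cluster]

theorem mem_cluster_self (ω : Config E) (v : V) : v ∈ cluster E ω v :=
  mem_cluster.2 .refl

theorem cluster_eq_of_conn {ω : Config E} {u v : V} (h : conn E ω v u) :
    cluster E ω v = cluster E ω u := by
  ext w
  simp only [mem_cluster]
  exact ⟨(conn_symm h).trans, h.trans⟩

theorem connG_some_cases {ω : GConfig E} {v : V} {x : Option V} (h : connG E ω (some v) x) :
    (∃ u, x = some u ∧ conn E ω.1 v u) ∨ ∃ w ∈ cluster E ω.1 v, ω.2 w = true := by
  induction h with
  | refl => exact .inl ⟨v, rfl, .refl⟩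
  | @tail _ z _ hyz ih =>
    rcases ih with ⟨u, rfl, hvu⟩ | hghost
    · match z, hyz with
      | some w, hadj => exact .inl ⟨w, rfl, hvu.tail hadj⟩
      | none, hu => exact .inr ⟨u, mem_cluster.2 hvu, hu⟩
    · exact .inr hghost

theorem connG_none_iff (ω : GConfig E) (v : V) :
    connG E ω (some v) none ↔ ∃ w ∈ cluster E ω.1 v, ω.2 w = true := by
  refine ⟨fun h => (connG_some_cases h).resolve_left (by simp), ?_⟩
  rintro ⟨w, hw, hghost⟩
  exact (connG_of_conn ω (mem_cluster.1 hw)).tail hghost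

theorem connG_some_iff {ω : GConfig E} {v : V} (hv : ¬ connG E ω (some v) none) (u : V) :
    connG E ω (some v) (some u) ↔ conn E ω.1 v u := by
  refine ⟨fun h => ?_, connG_of_conn ω⟩
  rcases connG_some_cases h with ⟨_, hu, hvu⟩ | hghost
  · exact Option.some_injective _ hu ▸ hvu
  · exact absurd ((connG_none_iff ω v).2 hghost) hv

variable [DecidableEq V]

theorem pairwiseDisjoint_clusters (ω : Config E) :
    (clusters E ω : Set (Finset V)).PairwiseDisjoint id := by
  simp only [clusters, coe_image, coe_univ, Set.image_univ]
  rintro _ ⟨v, rfl⟩ _ ⟨u, rfl⟩ hne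
  refine disjoint_left.2 fun w hv hu => hne ?_
  rw [cluster_eq_of_conn (mem_cluster.1 hv), cluster_eq_of_conn (mem_cluster.1 hu)]

theorem sum_clusters_sum {M : Type*} [AddCommMonoid M] (ω : Config E) (g : V → M) :
    ∑ C ∈ clusters E ω, ∑ v ∈ C, g v = ∑ v, g v := by
  have hcover : (clusters E ω).biUnion id = univ :=
    eq_univ_of_forall fun v => mem_biUnion.2
      ⟨cluster E ω v, mem_image_of_mem _ (mem_univ v), mem_cluster_self ω v⟩
  rw [← hcover, sum_biUnion (pairwiseDisjoint_clusters ω)]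
  rfl

theorem kGhost_eq_card_filter (ωi : Config E) (ωg : V → Bool) :
    kGhost E (ωi, ωg) = #((clusters E ωi).filter fun C => ∀ v ∈ C, ωg v = false) := by
  have hclosed : ∀ v, ¬ connG E (ωi, ωg) (some v) none ↔ ∀ u ∈ cluster E ωi v, ωg u = false := by
    simp [connG_none_iff]
  rw [kGhost, clusters, filter_image, filter_congr fun v _ => hclosed v]
  congr 1
  refine image_congr fun v hv => ?_
  ext u
  simp only [mem_filter, mem_univ, true_and, cluster]
  exact connG_some_iff ((hclosed v).2 (mem_filter.1 hv).2) u

end Clusters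

section Weights

open Finset

variable {V : Type*} [Fintype V] [DecidableEq V] {E : Finset (Sym2 V)}

noncomputable def clusterFactor (q h : ℝ) : ℝ :=
  (2 / q) * Real.cosh h + ((q - 2) / q) * Real.exp (-h)

theorem one_add_mul_exp_eq {q : ℝ} (hq : q ≠ 0) (h : ℝ) :
    1 + (q - 1) * Real.exp (-2 * h) = q * Real.exp (-h) * clusterFactor q h := by
  have hsq : Real.exp (-2 * h) = Real.exp (-h) * Real.exp (-h) := by
    rw [← Real.exp_add]; ring_nf
  have hinv : Real.exp (-h) * Real.exp h = 1 := by
    rw [← Real.exp_add, neg_add_cancel, Real.exp_zero]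
  rw [clusterFactor, Real.cosh_eq, hsq]
  field_simp
  linear_combination -hinv

theorem sum_fkWeightQ_ghost (q : ℝ) (J : Sym2 V → ℝ) (H : V → ℝ) (ωi : Config E) :
    ∑ ωg : V → Bool, fkWeightQ q J H E (ωi, ωg) =
      edgeWeight J E ωi * ∏ C ∈ clusters E ωi, (1 + (q - 1) * Real.exp (-2 * ∑ v ∈ C, H v)) := by
  have hbern := sum_prod_mul_pow_card_filter_false
    (fun v b => if b then 1 - Real.exp (-2 * H v) else Real.exp (-2 * H v)) (by simp)
    (pairwiseDisjoint_clusters ωi) q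
  have hclosed : ∀ C : Finset V, ∏ v ∈ C, Real.exp (-2 * H v) = Real.exp (-2 * ∑ v ∈ C, H v) := by
    intro C
    rw [← Real.exp_sum, mul_sum]
  simp only [Bool.false_eq_true, if_false, hclosed] at hbern
  simp only [fkWeightQ, kGhost_eq_card_filter]
  rw [← hbern, mul_sum]
  exact sum_congr rfl fun _ _ => by ring

theorem sum_fkWeightQ_ghost_eq {q : ℝ} (hq : q ≠ 0) (J : Sym2 V → ℝ) (H : V → ℝ)
    (ωi : Config E) :
    ∑ ωg : V → Bool, fkWeightQ q J H E (ωi, ωg) =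
      Real.exp (-∑ v, H v) *
        (rcWeightQ q J E ωi * ∏ C ∈ clusters E ωi, clusterFactor q (∑ v ∈ C, H v)) := by
  simp only [sum_fkWeightQ_ghost, one_add_mul_exp_eq hq, prod_mul_distrib, prod_const,
    ← Real.exp_sum, ← sum_neg_distrib, sum_clusters_sum, rcWeightQ]
  ring

omit [Fintype V] [DecidableEq V] in
theorem edgeWeight_nonneg {J : Sym2 V → ℝ} (hJ : ∀ e ∈ E, 0 ≤ J e) (ω : Config E) :
    0 ≤ edgeWeight J E ω := by
  refine prod_nonneg fun e _ => ?_
  split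
  · have : Real.exp (-2 * J e) ≤ 1 := Real.exp_le_one_iff.2 (by linarith [hJ e e.2])
    linarith
  · positivity

omit [Fintype V] [DecidableEq V] in
theorem edgeWeight_all_closed_pos (J : Sym2 V → ℝ) : 0 < edgeWeight J E fun _ => false :=
  prod_pos fun _ _ => by simp [Real.exp_pos]

theorem sum_rcWeightQ_pos {q : ℝ} (hq : 0 < q) {J : Sym2 V → ℝ} (hJ : ∀ e ∈ E, 0 ≤ J e) :
    0 < ∑ ω : Config E, rcWeightQ q J E ω :=
  sum_pos' (fun ω _ => mul_nonneg (pow_nonneg hq.le _) (edgeWeight_nonneg hJ ω))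
    ⟨_, mem_univ _, mul_pos (pow_pos hq _) (edgeWeight_all_closed_pos J)⟩

end Weights

end FK

theorem fk_radon_nikodym_general_q_general
    {V : Type*} [Fintype V] [DecidableEq V]
    (E : Finset (Sym2 V))
    (J : Sym2 V → ℝ) (hJ : ∀ e ∈ E, 0 ≤ J e)
    (H : V → ℝ)
    (q : ℝ) (hq : 0 < q) :
    ∀ ωi : FK.Config E,
      FK.fkMarginalQ q J H E ωi =
        FK.rcProbQ q J E ωi *
          (∏ C ∈ FK.clusters E ωi,
            ((2 / q) * Real.cosh (∑ v ∈ C, H v) +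
              ((q - 2) / q) * Real.exp (-(∑ v ∈ C, H v)))) /
          ∑ ω' : FK.Config E, FK.rcProbQ q J E ω' *
            ∏ C ∈ FK.clusters E ω',
              ((2 / q) * Real.cosh (∑ v ∈ C, H v) +
                ((q - 2) / q) * Real.exp (-(∑ v ∈ C, H v))) :=
  FK.sum_div_sum_eq_tilt_of_sum_eq (Real.exp_ne_zero _) (FK.sum_rcWeightQ_pos hq hJ).ne'
    (FK.sum_fkWeightQ_ghost_eq hq.ne' J H)

/-- Radon–Nikodym derivative for the random-cluster model with
general cluster weight `q > 0`. -/
theorem fk_radon_nikodym_general_q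
    {V : Type*} [Fintype V] [DecidableEq V]
    (E : Finset (Sym2 V)) (hE : ∀ e ∈ E, ¬ e.IsDiag)
    (J : Sym2 V → ℝ) (hJ : ∀ e ∈ E, 0 ≤ J e)
    (H : V → ℝ) (hH : ∀ v, 0 ≤ H v)
    (q : ℝ) (hq : 0 < q) :
    ∀ ωi : FK.Config E,
      FK.fkMarginalQ q J H E ωi =
        FK.rcProbQ q J E ωi *
          (∏ C ∈ FK.clusters E ωi,
            ((2 / q) * Real.cosh (∑ v ∈ C, H v) +
              ((q - 2) / q) * Real.exp (-(∑ v ∈ C, H v)))) /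
          ∑ ω' : FK.Config E, FK.rcProbQ q J E ω' *
            ∏ C ∈ FK.clusters E ω',
              ((2 / q) * Real.cosh (∑ v ∈ C, H v) +
                ((q - 2) / q) * Real.exp (-(∑ v ∈ C, H v))) :=
  fk_radon_nikodym_general_q_general E J hJ H q hq
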